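/- For all d, d′ ≥ 0, 0 ≤ k ≤ d and 0 ≤ k′ ≤ d′, the equality [W_{d,k} ∗ W_{d′,k′}, 2(d+d′)] = [W_{d+d′, k+k′}, 2(d+d′)] holds in Markov(⊔SB) (for d = 0 or d′ = 0 the factor W_{0,0} is the trivial braid on one strand and the number of strands is adjusted accordingly); in particular, the class of W_{d,k} equals the product X^k Y^{d−k} of the classes X = [τ_1, 2] and Y = [τ_1 σ_1, 2]. -/

import Mathlib

open scoped TensorProduct DirectSum

set_option synthInstance.maxHeartbeats 1000000
set_option maxHeartbeats 2000000

namespace SingularHOMFLYPT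

/-- Generators of the singular braid monoid on `n` strands: `pos i` is `σ_{i+1}`,
`neg i` is `σ_{i+1}⁻¹` and `tau i` is `τ_{i+1}`, for `i : Fin (n-1)`. -/
inductive SBGen (n : ℕ) : Type
  | pos : Fin (n - 1) → SBGen n
  | neg : Fin (n - 1) → SBGen n
  | tau : Fin (n - 1) → SBGen n

open FreeMonoid in
/-- The defining relations of the singular braid monoid `SB_n` (Baez, Birman). -/
inductive SBRel (n : ℕ) : FreeMonoid (SBGen n) → FreeMonoid (SBGen n) → Prop
  | inv_right (i : Fin (n - 1)) : SBRel n (of (.pos i) * of (.neg i)) 1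
  | inv_left (i : Fin (n - 1)) : SBRel n (of (.neg i) * of (.pos i)) 1
  | sigma_tau (i : Fin (n - 1)) :
      SBRel n (of (.pos i) * of (.tau i)) (of (.tau i) * of (.pos i))
  | braid (i j : Fin (n - 1)) (h : (i : ℕ) + 1 = j ∨ (j : ℕ) + 1 = i) :
      SBRel n (of (.pos i) * of (.pos j) * of (.pos i))
        (of (.pos j) * of (.pos i) * of (.pos j))
  | braid_tau (i j : Fin (n - 1)) (h : (i : ℕ) + 1 = j ∨ (j : ℕ) + 1 = i) :
      SBRel n (of (.pos i) * of (.pos j) * of (.tau i))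
        (of (.tau j) * of (.pos i) * of (.pos j))
  | comm_ss (i j : Fin (n - 1)) (h : (i : ℕ) + 2 ≤ j ∨ (j : ℕ) + 2 ≤ i) :
      SBRel n (of (.pos i) * of (.pos j)) (of (.pos j) * of (.pos i))
  | comm_st (i j : Fin (n - 1)) (h : (i : ℕ) + 2 ≤ j ∨ (j : ℕ) + 2 ≤ i) :
      SBRel n (of (.pos i) * of (.tau j)) (of (.tau j) * of (.pos i))
  | comm_tt (i j : Fin (n - 1)) (h : (i : ℕ) + 2 ≤ j ∨ (j : ℕ) + 2 ≤ i) :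
      SBRel n (of (.tau i) * of (.tau j)) (of (.tau j) * of (.tau i))

/-- The congruence on the free monoid generated by the singular braid relations. -/
def SBcon (n : ℕ) : Con (FreeMonoid (SBGen n)) := conGen (SBRel n)

/-- The singular braid monoid on `n` strands, as a presented monoid. -/
abbrev SB (n : ℕ) : Type := (SBcon n).Quotient

/-- The canonical projection from the free monoid onto `SB n`. -/
def SB.mk {n : ℕ} : FreeMonoid (SBGen n) →* SB n := Con.mk' (SBcon n)

/-- The generator `σ_{i+1}` of `SB n`. -/
def sG {n : ℕ} (i : Fin (n - 1)) : SB n := SB.mk (.of (.pos i))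

/-- The generator `σ_{i+1}⁻¹` of `SB n`. -/
def sInvG {n : ℕ} (i : Fin (n - 1)) : SB n := SB.mk (.of (.neg i))

/-- The generator `τ_{i+1}` of `SB n`. -/
def tauG {n : ℕ} (i : Fin (n - 1)) : SB n := SB.mk (.of (.tau i))

theorem SB.sound {n : ℕ} {a b : FreeMonoid (SBGen n)} (h : SBRel n a b) :
    SB.mk a = SB.mk b :=
  Con.eq _ |>.2 (ConGen.Rel.of a b h)

/-- Lift a map on generators to a monoid homomorphism on `SB n`. -/
def SB.lift {n : ℕ} {M : Type*} [Monoid M] (f : SBGen n → M)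
    (h : ∀ a b, SBRel n a b → FreeMonoid.lift f a = FreeMonoid.lift f b) :
    SB n →* M :=
  Con.lift _ (FreeMonoid.lift f)
    (Con.conGen_le.2 fun a b hab => (Con.ker_rel _).2 (h a b hab))

@[simp] theorem SB.lift_mk {n : ℕ} {M : Type*} [Monoid M] (f : SBGen n → M)
    (h : ∀ a b, SBRel n a b → FreeMonoid.lift f a = FreeMonoid.lift f b)
    (w : FreeMonoid (SBGen n)) :
    SB.lift f h (SB.mk w) = FreeMonoid.lift f w :=
  Con.lift_coe _ w

/-- The number of singular points (`τ`-letters) of a generator. -/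
def degGen {n : ℕ} : SBGen n → Multiplicative ℕ
  | .tau _ => Multiplicative.ofAdd 1
  | _ => 1

/-- The monoid homomorphism `deg : SB n →* (ℕ, +)` counting singular points. -/
def degM {n : ℕ} : SB n →* Multiplicative ℕ :=
  SB.lift degGen (by
    rintro a b h
    cases h <;> simp [degGen, mul_comm])
/-- Shifting generators by `k`, viewing `SB n` inside `SB N` (strands `k+1, …, k+n`). -/
def shiftGen {n : ℕ} (N k : ℕ) (h : k + n ≤ N) : SBGen n → SBGen N
  | .pos i => .pos ⟨k + i, by have := i.2; omega⟩
  | .neg i => .neg ⟨k + i, by have := i.2; omega⟩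
  | .tau i => .tau ⟨k + i, by have := i.2; omega⟩

theorem shiftGen_rel {n : ℕ} (N k : ℕ) (h : k + n ≤ N) {a b : FreeMonoid (SBGen n)}
    (hab : SBRel n a b) :
    SBRel N (FreeMonoid.map (shiftGen N k h) a) (FreeMonoid.map (shiftGen N k h) b) := by
  cases hab <;>
    simp only [map_mul, map_one, FreeMonoid.map_of, shiftGen] <;>
    first
      | exact SBRel.inv_right _
      | exact SBRel.inv_left _
      | exact SBRel.sigma_tau _
      | (rename_i i j hij; exact SBRel.braid _ _ (by simp; omega))
      | (rename_i i j hij; first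
          | exact SBRel.braid_tau _ _ (by simp; omega)
          | exact SBRel.comm_ss _ _ (by simp; omega)
          | exact SBRel.comm_st _ _ (by simp; omega)
          | exact SBRel.comm_tt _ _ (by simp; omega))

/-- The monoid homomorphism `SB n →* SB N` placing a braid on the strands `k+1, …, k+n`. -/
def shiftHom {n : ℕ} (N k : ℕ) (h : k + n ≤ N) : SB n →* SB N :=
  Con.lift _ (SB.mk.comp (FreeMonoid.map (shiftGen N k h)))
    (Con.conGen_le.2 fun a b hab => (Con.ker_rel _).2 (SB.sound (shiftGen_rel N k h hab)))

/-- The natural inclusion `SB n →* SB N` (adding trivial strands on the right). -/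
def inclSB {n : ℕ} (N : ℕ) (h : n ≤ N) : SB n →* SB N := shiftHom N 0 (by omega)

/-- `α ∗ β`: the braid obtained by placing `β` (on `m` strands) above (to the right of)
`α` (on `n` strands), realized in `SB N` for `n + m ≤ N`. -/
def starIn {n m : ℕ} (N : ℕ) (h : n + m ≤ N) (α : SB n) (β : SB m) : SB N :=
  inclSB N (by omega) α * shiftHom N n h β
@[simp] theorem shiftHom_mk {n : ℕ} (N k : ℕ) (h : k + n ≤ N) (w : FreeMonoid (SBGen n)) :
    shiftHom N k h (SB.mk w) = SB.mk (FreeMonoid.map (shiftGen N k h) w) :=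
  Con.lift_coe _ w

theorem shiftHom_sG {n : ℕ} (N k : ℕ) (h : k + n ≤ N) (i : Fin (n - 1)) :
    shiftHom N k h (sG i) = sG ⟨k + i.1, by have := i.2; omega⟩ := rfl

theorem inclSB_sG {n : ℕ} (N : ℕ) (h : n ≤ N) (i : Fin (n - 1)) :
    inclSB N h (sG i) = sG ⟨0 + i.1, by have := i.2; omega⟩ := rfl

noncomputable section

/-- The field `ℂ(q)` of rational functions over `ℂ` in the variable `q`. -/
abbrev Kq : Type := RatFunc ℂ

/-- The field `ℂ(q,z) = ℂ(q)(z)` of rational functions over `ℂ` in the variables `q, z`. -/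
abbrev Lqz : Type := RatFunc Kq

/-- The variable `q`, as an element of `ℂ(q)`. -/
def qK : Kq := RatFunc.X

/-- The variable `z`, as an element of `ℂ(q,z)`. -/
def zL : Lqz := RatFunc.X

/-- The variable `q`, as an element of `ℂ(q,z)`. -/
def qL : Lqz := algebraMap Kq Lqz qK

/-- The Hecke relations `σ_k² = (q-1)σ_k + q` in the monoid algebra `ℂ(q)[SB_n]`. -/
def HeckeRel (n : ℕ) : MonoidAlgebra Kq (SB n) → MonoidAlgebra Kq (SB n) → Prop :=
  fun x y => ∃ i : Fin (n - 1),
    x = MonoidAlgebra.of Kq (SB n) (sG i) ^ 2 ∧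
    y = (qK - 1) • MonoidAlgebra.of Kq (SB n) (sG i) + qK • 1

/-- The singular Hecke algebra `H(SB_n)`: the quotient of `ℂ(q)[SB_n]` by the two-sided
ideal generated by the elements `σ_k² - (q-1)σ_k - q`. -/
abbrev Hecke (n : ℕ) : Type := RingQuot (HeckeRel n)

/-- The image of a singular braid in the singular Hecke algebra. -/
def heckeOf {n : ℕ} (β : SB n) : Hecke n :=
  RingQuot.mkAlgHom Kq (HeckeRel n) (MonoidAlgebra.of Kq (SB n) β)

/-- `H_z(SB_n) := ℂ(q,z) ⊗_{ℂ(q)} H(SB_n)`. -/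
abbrev HeckeZ (n : ℕ) : Type := Lqz ⊗[Kq] Hecke n

/-- The image of a singular braid in `H_z(SB_n)`. -/
def ofHZ {n : ℕ} (β : SB n) : HeckeZ n := (1 : Lqz) ⊗ₜ[Kq] heckeOf β

/-- The algebra homomorphism `H(SB_n) → H(SB_{n+1})` induced by the natural inclusion
`SB_n ↪ SB_{n+1}`. -/
def heckeIncl (n : ℕ) : Hecke n →ₐ[Kq] Hecke (n + 1) :=
  RingQuot.liftAlgHom Kq
    ⟨((RingQuot.mkAlgHom Kq (HeckeRel (n + 1))).comp
        (MonoidAlgebra.mapDomainAlgHom Kq Kq (inclSB (n + 1) (Nat.le_succ n)))),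
      by
        rintro x y ⟨i, rfl, rfl⟩
        have hi := i.2
        set i' : Fin ((n + 1) - 1) := ⟨0 + i.1, by omega⟩ with hi'
        have hgen : (MonoidAlgebra.mapDomainAlgHom Kq Kq (inclSB (n + 1) (Nat.le_succ n)))
            (MonoidAlgebra.of Kq (SB n) (sG i)) = MonoidAlgebra.of Kq (SB (n + 1)) (sG i') := by
          rw [MonoidAlgebra.of_apply, MonoidAlgebra.mapDomainAlgHom_apply,
            MonoidAlgebra.mapDomain_single, inclSB_sG, MonoidAlgebra.of_apply]
        have hrel : HeckeRel (n + 1) (MonoidAlgebra.of Kq (SB (n + 1)) (sG i') ^ 2)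
            ((qK - 1) • MonoidAlgebra.of Kq (SB (n + 1)) (sG i') + qK • 1) := ⟨i', rfl, rfl⟩
        have hmk := RingQuot.mkAlgHom_rel Kq hrel
        simp only [map_pow, map_add, map_smul, map_one] at hmk
        simp only [AlgHom.coe_comp, Function.comp_apply, map_pow, map_add, map_smul, map_one,
          hgen]
        exact hmk⟩

/-- The algebra homomorphism `ι_n : H_z(SB_n) → H_z(SB_{n+1})`. -/
def iotaHZ (n : ℕ) : HeckeZ n →ₐ[Lqz] HeckeZ (n + 1) :=
  Algebra.TensorProduct.map (AlgHom.id Lqz Lqz) (heckeIncl n)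
/-- The `ℂ(q)`-subspace `H(S_dB_n)` of the singular Hecke algebra spanned by the images of
the singular braids with `d` singular points. -/
def HSd (n d : ℕ) : Submodule Kq (Hecke n) :=
  Submodule.span Kq
    {x | ∃ β : SB n, degM β = Multiplicative.ofAdd d ∧ x = heckeOf β}

/-- The `ℂ(q,z)`-subspace `H_z(S_dB_n)` of `H_z(SB_n)` spanned by the images of the singular
braids with `d` singular points. -/
def HzSd (n d : ℕ) : Submodule Lqz (HeckeZ n) :=
  Submodule.span Lqz
    {x | ∃ β : SB n, degM β = Multiplicative.ofAdd d ∧ x = ofHZ β}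

/-- Strand counts: the positive natural numbers. -/
abbrev Idx : Type := {n : ℕ // 0 < n}

/-- The direct sum `⊕_{n ≥ 1} H_z(SB_n)`. -/
abbrev MV : Type := ⨁ i : Idx, HeckeZ i.1

instance instAddCommGroupHeckeZ (n : ℕ) : AddCommGroup (HeckeZ n) := inferInstance
instance instModuleHeckeZ (n : ℕ) : Module Lqz (HeckeZ n) := inferInstance
instance instAddCommGroupMV : AddCommGroup MV := inferInstance
instance instModuleMV : Module Lqz MV := inferInstance

/-- The canonical inclusion of the `n`-th summand of `⊕_{n ≥ 1} H_z(SB_n)`. -/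
def mvof (i : Idx) : HeckeZ i.1 →ₗ[Lqz] MV :=
  DirectSum.lof Lqz Idx (fun i => HeckeZ i.1) i

/-- Successor of a strand count. -/
def succI (i : Idx) : Idx := ⟨i.1 + 1, Nat.succ_pos _⟩

/-- The generator `σ_n` of `SB_{n+1}`. -/
def sigmaLast (i : Idx) : SB (i.1 + 1) := sG ⟨i.1 - 1, Nat.sub_lt i.2 one_pos⟩

/-- The Markov relations in `⊕_{n ≥ 1} H_z(SB_n)`: trace relations, stabilization relations
and positive Markov relations. -/
def markovRels : Set MV :=
  {x | ∃ (i : Idx) (a b : HeckeZ i.1), x = mvof i (a * b) - mvof i (b * a)} ∪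
  {x | ∃ (i : Idx) (a : HeckeZ i.1), x = mvof i a - mvof (succI i) (iotaHZ i.1 a)} ∪
  {x | ∃ (i : Idx) (a : HeckeZ i.1),
    x = mvof (succI i) (iotaHZ i.1 a * ofHZ (sigmaLast i)) - zL • mvof i a}

/-- The Markov module `Markov(⊔SB)`. -/
abbrev Markov : Type := MV ⧸ Submodule.span Lqz markovRels

instance instAddCommGroupMarkov : AddCommGroup Markov := inferInstance
instance instModuleMarkov : Module Lqz Markov := inferInstance

/-- The class `[a, m]` in the Markov module of an element `a ∈ H_z(SB_m)`. -/
def markovClass (m : ℕ) (hm : 0 < m) (a : HeckeZ m) : Markov :=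
  Submodule.Quotient.mk (mvof ⟨m, hm⟩ a)

/-- The class `[β, m]` in the Markov module of a singular braid `β ∈ SB_m`. -/
def braidClass (m : ℕ) (hm : 0 < m) (β : SB m) : Markov :=
  markovClass m hm (ofHZ β)

/-- The direct sum `⊕_{n ≥ 1} H_z(S_dB_n)`. -/
abbrev MVD (d : ℕ) : Type := ⨁ i : Idx, ↥(HzSd i.1 d)

instance instAddCommGroupMVD (d : ℕ) : AddCommGroup (MVD d) := inferInstance
instance instModuleMVD (d : ℕ) : Module Lqz (MVD d) := inferInstance

/-- The canonical inclusion of the `n`-th summand of `⊕_{n ≥ 1} H_z(S_dB_n)`. -/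
def mvdof (d : ℕ) (i : Idx) : ↥(HzSd i.1 d) →ₗ[Lqz] MVD d :=
  DirectSum.lof Lqz Idx (fun i => ↥(HzSd i.1 d)) i

/-- The Markov relations in `⊕_{n ≥ 1} H_z(S_dB_n)`. -/
def markovRelsD (d : ℕ) : Set (MVD d) :=
  {x | ∃ (i : Idx) (k l : ℕ), k + l = d ∧ ∃ (a b : HeckeZ i.1),
    a ∈ HzSd i.1 k ∧ b ∈ HzSd i.1 l ∧
    ∃ (hab : a * b ∈ HzSd i.1 d) (hba : b * a ∈ HzSd i.1 d),
      x = mvdof d i ⟨a * b, hab⟩ - mvdof d i ⟨b * a, hba⟩} ∪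
  {x | ∃ (i : Idx) (a : HeckeZ i.1) (ha : a ∈ HzSd i.1 d)
      (ha' : iotaHZ i.1 a ∈ HzSd (i.1 + 1) d),
    x = mvdof d i ⟨a, ha⟩ - mvdof d (succI i) ⟨iotaHZ i.1 a, ha'⟩} ∪
  {x | ∃ (i : Idx) (a : HeckeZ i.1) (ha : a ∈ HzSd i.1 d)
      (ha' : iotaHZ i.1 a * ofHZ (sigmaLast i) ∈ HzSd (i.1 + 1) d),
    x = mvdof d (succI i) ⟨iotaHZ i.1 a * ofHZ (sigmaLast i), ha'⟩ - zL • mvdof d i ⟨a, ha⟩}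

/-- The `d`-th Markov module `Markov(⊔S_dB)`. -/
abbrev MarkovD (d : ℕ) : Type := MVD d ⧸ Submodule.span Lqz (markovRelsD d)

instance instAddCommGroupMarkovD (d : ℕ) : AddCommGroup (MarkovD d) := inferInstance
instance instModuleMarkovD (d : ℕ) : Module Lqz (MarkovD d) := inferInstance

/-- The class `[β, m]` in the `d`-th Markov module of a singular braid `β ∈ S_dB_m`
(defined to be `0` if `β` does not have exactly `d` singular points). -/
def classD (d m : ℕ) (hm : 0 < m) (β : SB m) : MarkovD d :=
  if h : degM β = Multiplicative.ofAdd d then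
    Submodule.Quotient.mk (mvdof d ⟨m, hm⟩ ⟨ofHZ β, Submodule.subset_span ⟨β, h, rfl⟩⟩)
  else 0
/-- The singular braid `W_{d,k} = τ_1 τ_3 ⋯ τ_{2k-1} (τ_{2k+1}σ_{2k+1}) ⋯ (τ_{2d-1}σ_{2d-1})`
in `SB_{2d}` (for `1 ≤ d` and `k ≤ d`). -/
def W (d k : ℕ) : SB (2 * d) :=
  ((List.range d).map (fun j =>
    if h : 2 * j < 2 * d - 1 then
      (if j < k then tauG ⟨2 * j, h⟩ else tauG ⟨2 * j, h⟩ * sG ⟨2 * j, h⟩)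
    else 1)).prod

/-- The class of `W_{d,k}` in the `d`-th Markov module: `[W_{d,k}, 2d]` for `d ≥ 1`, and the
class `[W_{0,0}, 1]` of the trivial braid on one strand for `d = 0`. -/
def WclassD (d k : ℕ) : MarkovD d :=
  if hd : d = 0 then hd ▸ classD 0 1 one_pos 1
  else classD d (2 * d) (by omega) (W d k)

/-- The singular braid `α_0 τ_{i_1} α_1 τ_{i_2} ⋯ τ_{i_d} α_d`. -/
def sbWord {m d : ℕ} (α : Fin (d + 1) → SB m) (idx : Fin d → Fin (m - 1)) : SB m :=
  α 0 * ((List.ofFn fun j : Fin d => tauG (idx j) * α j.succ).prod)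

/-- The singular braid `α_0 τ_{i_1} α_1 ⋯ τ_{i_{k-1}} α_{k-1} x α_k τ_{i_{k+1}} ⋯ τ_{i_d} α_d`
obtained from `α_0 τ_{i_1} α_1 ⋯ τ_{i_d} α_d` by replacing the letter `τ_{i_k}` by `x`. -/
def sbWordRepl {m d : ℕ} (α : Fin (d + 1) → SB m) (idx : Fin d → Fin (m - 1))
    (k : Fin d) (x : SB m) : SB m :=
  α 0 * ((List.ofFn fun j : Fin d => (if j = k then x else tauG (idx j)) * α j.succ).prod)

/-- `RepGen false i = 1` (deleting a `τ` letter) and `RepGen true i = σ_{i+1}` (replacing a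
`τ` letter by the corresponding `σ` letter). -/
def RepGen {m : ℕ} (ε : Bool) (i : Fin (m - 1)) : SB m := if ε then sG i else 1

/-- `IsG d ε g` says that the linear map `g : Markov(⊔S_dB) → Markov(⊔S_{d-1}B)` is induced
by the family of maps `f_{n,ε}` (deletion of one `τ` letter for `ε = false`, replacement of one
`τ` letter by the corresponding `σ` letter for `ε = true`), i.e. that
`g([β,n]) = [f_{n,ε}(β), n]` for every singular braid `β ∈ S_dB_n`. -/
def IsG (d : ℕ) (ε : Bool) (g : MarkovD d →ₗ[Lqz] MarkovD (d - 1)) : Prop :=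
  ∀ (m : ℕ) (hm : 0 < m) (α : Fin (d + 1) → SB m) (idx : Fin d → Fin (m - 1)),
    (∀ j, degM (α j) = Multiplicative.ofAdd 0) →
    g (classD d m hm (sbWord α idx)) =
      ∑ k : Fin d, classD (d - 1) m hm (sbWordRepl α idx k (RepGen ε (idx k)))

/-- The `ℂ(q,z)`-vector space freely spanned by the set `S_dB_m` of singular braids on `m`
strands with `d` singular points. -/
abbrev FreeSd (m d : ℕ) : Type :=
  {β : SB m // degM β = Multiplicative.ofAdd d} →₀ Lqz

/-- The basis element of `ℂ(q,z)[S_dB_m]` corresponding to a braid `β ∈ S_dB_m` (defined to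
be `0` if `β` does not have exactly `d` singular points). -/
def freeElem {m : ℕ} (d : ℕ) (β : SB m) : FreeSd m d :=
  if h : degM β = Multiplicative.ofAdd d then Finsupp.single ⟨β, h⟩ 1 else 0

/-- Iterated product (power) with respect to a given bilinear multiplication. -/
def powAux (mul : Markov →ₗ[Lqz] Markov →ₗ[Lqz] Markov) (one x : Markov) : ℕ → Markov
  | 0 => one
  | k + 1 => mul x (powAux mul one x k)

/-!
`W_{d,k}` is a product of two-strand blocks `τ_{2j+1}` or `τ_{2j+1}σ_{2j+1}`, which pairwise
commute. The braid `σ_{2j+2}σ_{2j+1}σ_{2j+3}σ_{2j+2}` conjugates block `j` to block `j+1` and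
back while commuting with all other blocks, so by the trace relation the class of a block
product depends only on the multiset of its blocks. Since `W_{d,k} ∗ W_{d',k'}` is a block
product with the same blocks as `W_{d+d',k+k'}`, this gives the main identity. A trivial strand
on the right of a braid is removed by the stabilization relation; one on the left is first moved
to the right by conjugating with `σ_1σ_2⋯σ_n`. Concatenating block lists then yields
`[W_{d,k}] = X^k Y^{d-k}`.
-/

theorem sG_mul_sInvG {n : ℕ} (i : Fin (n - 1)) : sG i * sInvG i = 1 := by
  simpa [sG, sInvG] using SB.sound (SBRel.inv_right i)

theorem sInvG_mul_sG {n : ℕ} (i : Fin (n - 1)) : sInvG i * sG i = 1 := by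
  simpa [sG, sInvG] using SB.sound (SBRel.inv_left i)

/-- `σ_{i+1}` as a unit of `SB N`, with the junk value `1` when `N - 1 ≤ i`. -/
def sig (N i : ℕ) : (SB N)ˣ :=
  if h : i < N - 1 then ⟨sG ⟨i, h⟩, sInvG ⟨i, h⟩, sG_mul_sInvG _, sInvG_mul_sG _⟩ else 1

/-- `τ_{i+1}` in `SB N`, with the junk value `1` when `N - 1 ≤ i`. -/
def tau (N i : ℕ) : SB N := if h : i < N - 1 then tauG ⟨i, h⟩ else 1

theorem coe_sig_of_lt {N i : ℕ} (h : i < N - 1) : (sig N i : SB N) = sG ⟨i, h⟩ := by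
  simp [sig, h]

theorem coe_sig_inv_of_lt {N i : ℕ} (h : i < N - 1) :
    (↑(sig N i)⁻¹ : SB N) = sInvG ⟨i, h⟩ := by
  simp [sig, h]

theorem tau_of_lt {N i : ℕ} (h : i < N - 1) : tau N i = tauG ⟨i, h⟩ := by
  simp [tau, h]

theorem commute_sig_sig {N i j : ℕ} (h : i + 2 ≤ j ∨ j + 2 ≤ i) :
    Commute (sig N i : SB N) (sig N j) := by
  unfold sig
  split_ifs with hi hj
  · simpa [Commute, SemiconjBy, sG] using SB.sound (SBRel.comm_ss ⟨i, hi⟩ ⟨j, hj⟩ h)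
  all_goals simp

theorem commute_sig_tau {N i j : ℕ} (h : i + 2 ≤ j ∨ j + 2 ≤ i) :
    Commute (sig N i : SB N) (tau N j) := by
  unfold sig tau
  split_ifs with hi hj
  · simpa [Commute, SemiconjBy, sG, tauG] using SB.sound (SBRel.comm_st ⟨i, hi⟩ ⟨j, hj⟩ h)
  all_goals simp

theorem commute_tau_tau {N i j : ℕ} (h : i + 2 ≤ j ∨ j + 2 ≤ i) :
    Commute (tau N i) (tau N j) := by
  unfold tau
  split_ifs with hi hj
  · simpa [Commute, SemiconjBy, tauG] using SB.sound (SBRel.comm_tt ⟨i, hi⟩ ⟨j, hj⟩ h)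
  all_goals simp

theorem sig_braid {N i j : ℕ} (h : i + 1 = j ∨ j + 1 = i) (hi : i < N - 1) (hj : j < N - 1) :
    (sig N i * sig N j * sig N i : SB N) = sig N j * sig N i * sig N j := by
  simpa [coe_sig_of_lt hi, coe_sig_of_lt hj, sG]
    using SB.sound (SBRel.braid ⟨i, hi⟩ ⟨j, hj⟩ h)

theorem sig_sig_tau {N i j : ℕ} (h : i + 1 = j ∨ j + 1 = i) (hi : i < N - 1) (hj : j < N - 1) :
    (sig N i * sig N j : SB N) * tau N i = tau N j * sig N i * sig N j := by
  simpa [coe_sig_of_lt hi, coe_sig_of_lt hj, tau_of_lt hi, tau_of_lt hj, sG, tauG]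
    using SB.sound (SBRel.braid_tau ⟨i, hi⟩ ⟨j, hj⟩ h)

/-- Families of letters on which the braid generators act as on the `σ_i` themselves; both `σ`
and `τ` qualify, so the conjugation facts below are proved once for both. -/
structure BraidCompatible (N : ℕ) (x : ℕ → SB N) : Prop where
  commute_far : ∀ {i j : ℕ}, i + 2 ≤ j ∨ j + 2 ≤ i → Commute (sig N i : SB N) (x j)
  semiconj_up : ∀ {a : ℕ}, a + 1 < N - 1 →
    SemiconjBy (sig N a * sig N (a + 1) : SB N) (x a) (x (a + 1))
  semiconj_down : ∀ {a : ℕ}, a + 1 < N - 1 →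
    SemiconjBy (sig N (a + 1) * sig N a : SB N) (x (a + 1)) (x a)

theorem braidCompatible_sig (N : ℕ) : BraidCompatible N fun i => (sig N i : SB N) where
  commute_far := commute_sig_sig
  semiconj_up h := by
    simpa [SemiconjBy, mul_assoc] using sig_braid (Or.inl rfl) (by omega) h
  semiconj_down h := by
    simpa [SemiconjBy, mul_assoc] using sig_braid (Or.inr rfl) h (by omega)

theorem braidCompatible_tau (N : ℕ) : BraidCompatible N (tau N) where
  commute_far := commute_sig_tau
  semiconj_up h := by
    simpa [SemiconjBy, mul_assoc] using sig_sig_tau (Or.inl rfl) (by omega) h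
  semiconj_down h := by
    simpa [SemiconjBy, mul_assoc] using sig_sig_tau (Or.inr rfl) h (by omega)

theorem BraidCompatible.mul {N : ℕ} {x y : ℕ → SB N} (hx : BraidCompatible N x)
    (hy : BraidCompatible N y) : BraidCompatible N (x * y) where
  commute_far h := (hx.commute_far h).mul_right (hy.commute_far h)
  semiconj_up h := (hx.semiconj_up h).mul_right (hy.semiconj_up h)
  semiconj_down h := (hx.semiconj_down h).mul_right (hy.semiconj_down h)

/-- `σ_1 σ_2 ⋯ σ_m`. -/
def sigPrefix (N : ℕ) : ℕ → (SB N)ˣ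
  | 0 => 1
  | m + 1 => sigPrefix N m * sig N m

theorem BraidCompatible.commute_sigPrefix {N : ℕ} {x : ℕ → SB N} (hx : BraidCompatible N x)
    {i : ℕ} : ∀ {m : ℕ}, m + 1 ≤ i → Commute (sigPrefix N m : SB N) (x i)
  | 0, _ => by simp [sigPrefix]
  | m + 1, h => by
    simpa [sigPrefix] using (hx.commute_sigPrefix (by omega)).mul_left
      (hx.commute_far (Or.inl (by omega)))

theorem BraidCompatible.semiconjBy_sigPrefix {N : ℕ} {x : ℕ → SB N} (hx : BraidCompatible N x)
    {i m : ℕ} (him : i + 2 ≤ m) (hm : m ≤ N - 1) :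
    SemiconjBy (sigPrefix N m : SB N) (x i) (x (i + 1)) := by
  induction m, him using Nat.le_induction with
  | base =>
    simpa [sigPrefix, mul_assoc] using
      SemiconjBy.mul_left (hx.commute_sigPrefix (m := i) le_rfl) (hx.semiconj_up (by omega))
  | succ m hm' ih =>
    simpa [sigPrefix] using
      SemiconjBy.mul_left (ih (by omega)) (hx.commute_far (Or.inr (by omega)))

/-- The braid exchanging the strand pairs `(i+1, i+2)` and `(i+3, i+4)`. -/
def swap (N i : ℕ) : (SB N)ˣ := sig N (i + 1) * sig N i * (sig N (i + 2) * sig N (i + 1))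

section Swap

variable {N : ℕ} {x : ℕ → SB N}

theorem BraidCompatible.semiconjBy_swap (hx : BraidCompatible N x) {i : ℕ} (h : i + 2 < N - 1) :
    SemiconjBy (swap N i : SB N) (x i) (x (i + 2)) := by
  have hswap : (swap N i : SB N) = sig N (i + 1) * sig N (i + 2) * (sig N i * sig N (i + 1)) := by
    simp only [swap, Units.val_mul, mul_assoc,
      ((commute_sig_sig (N := N) (i := i) (j := i + 2) (by omega)).left_comm _)]
  rw [hswap]
  exact SemiconjBy.mul_left (hx.semiconj_up h) (hx.semiconj_up (by omega))

theorem BraidCompatible.semiconjBy_swap_symm (hx : BraidCompatible N x) {i : ℕ}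
    (h : i + 2 < N - 1) : SemiconjBy (swap N i : SB N) (x (i + 2)) (x i) := by
  simpa [swap] using SemiconjBy.mul_left (hx.semiconj_down (by omega)) (hx.semiconj_down h)

theorem BraidCompatible.commute_swap (hx : BraidCompatible N x) {i m : ℕ}
    (h : m + 2 ≤ i ∨ i + 4 ≤ m) : Commute (swap N i : SB N) (x m) := by
  have hfar : ∀ k, i ≤ k → k ≤ i + 2 → Commute (sig N k : SB N) (x m) :=
    fun k _ _ => hx.commute_far (by omega)
  simp only [swap, Units.val_mul]
  exact ((hfar _ (by omega) (by omega)).mul_left (hfar _ le_rfl (by omega))).mul_left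
    ((hfar _ (by omega) le_rfl).mul_left (hfar _ (by omega) (by omega)))

end Swap

/-- The two-strand pieces of `W_{d,k}`: `blk N true i = τ_{i+1}` and
`blk N false i = τ_{i+1} σ_{i+1}`. -/
def blk (N : ℕ) (b : Bool) : ℕ → SB N :=
  bif b then tau N else tau N * fun i => (sig N i : SB N)

theorem braidCompatible_blk (N : ℕ) (b : Bool) : BraidCompatible N (blk N b) := by
  cases b
  · exact (braidCompatible_tau N).mul (braidCompatible_sig N)
  · exact braidCompatible_tau N

theorem commute_blk {N i j : ℕ} (h : i + 2 ≤ j ∨ j + 2 ≤ i) (b b' : Bool) :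
    Commute (blk N b i) (blk N b' j) := by
  have tt := commute_tau_tau (N := N) h
  have ts := (commute_sig_tau (N := N) h.symm).symm
  have st := commute_sig_tau (N := N) h
  have ss := commute_sig_sig (N := N) h
  cases b <;> cases b' <;> simp only [blk, cond_true, cond_false, Pi.mul_apply]
  · exact (tt.mul_right ts).mul_left (st.mul_right ss)
  · exact tt.mul_left st
  · exact tt.mul_right ts
  · exact tt

/-- The product of the blocks `b₀, b₁, …`, placed on consecutive strand pairs starting with
the `o`-th. -/
def blockProd (N o : ℕ) : List Bool → SB N
  | [] => 1
  | b :: l => blk N b (2 * o) * blockProd N (o + 1) l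

theorem blockProd_append (N : ℕ) (l l' : List Bool) :
    ∀ o, blockProd N o (l ++ l') = blockProd N o l * blockProd N (o + l.length) l' := by
  induction l with
  | nil => simp [blockProd]
  | cons b l ih =>
    intro o
    simp only [List.cons_append, blockProd, ih, mul_assoc, List.length_cons]
    ring_nf

theorem commute_blockProd {N : ℕ} {g : SB N} {o : ℕ}
    (h : ∀ m b, o ≤ m → Commute g (blk N b (2 * m))) (l : List Bool) :
    Commute g (blockProd N o l) := by
  induction l generalizing o with
  | nil => exact Commute.one_right g
  | cons b l ih => exact (h o b le_rfl).mul_right (ih fun m b hm => h m b (by omega))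

/-- The commutation clause is what carries the induction through the `cons` step. -/
theorem exists_semiconjBy_blockProd_of_perm {N : ℕ} {l l' : List Bool} (p : l.Perm l') :
    ∀ o, 2 * (o + l.length) ≤ N → ∃ u : (SB N)ˣ,
      SemiconjBy (u : SB N) (blockProd N o l) (blockProd N o l') ∧
      ∀ m b, m < o → Commute (u : SB N) (blk N b (2 * m)) := by
  induction p with
  | nil => exact fun o _ => ⟨1, SemiconjBy.one_left _, fun m b _ => Commute.one_left _⟩
  | cons b _ ih =>
    intro o ho
    obtain ⟨u, hu, hcomm⟩ := ih (o + 1) (by simp at ho; omega)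
    exact ⟨u, SemiconjBy.mul_right (hcomm o b (by omega)) hu,
      fun m b hm => hcomm m b (by omega)⟩
  | swap b b' l =>
    intro o ho
    simp only [List.length_cons] at ho
    have hN : 2 * o + 2 < N - 1 := by omega
    refine ⟨swap N (2 * o), ?_, fun m b hm =>
      (braidCompatible_blk N b).commute_swap (Or.inl (by omega))⟩
    show SemiconjBy _ (blk N b' (2 * o) * (blk N b (2 * o + 2) * blockProd N (o + 2) l))
      (blk N b (2 * o) * (blk N b' (2 * o + 2) * blockProd N (o + 2) l))
    have hrest := commute_blockProd (g := (swap N (2 * o) : SB N)) (o := o + 2)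
      (fun m b hm => (braidCompatible_blk N b).commute_swap (Or.inr (by omega))) l
    have hconj := ((braidCompatible_blk N b').semiconjBy_swap hN).mul_right
      (((braidCompatible_blk N b).semiconjBy_swap_symm hN).mul_right hrest)
    rwa [← mul_assoc (blk N b (2 * o)),
      ← (commute_blk (i := 2 * o + 2) (j := 2 * o) (by omega) b' b).eq, mul_assoc]
  | trans p _ ihp ihq =>
    intro o ho
    obtain ⟨u, hu, hcomm⟩ := ihp o ho
    obtain ⟨v, hv, hcomm'⟩ := ihq o (by rwa [← p.length_eq])
    exact ⟨v * u, hv.mul_left hu, fun m b hm => (hcomm' m b hm).mul_left (hcomm m b hm)⟩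

section Shift

variable {n N k : ℕ} (h : k + n ≤ N)

theorem shiftHom_sig {i : ℕ} (hi : i < n - 1) :
    shiftHom N k h (sig n i) = (sig N (k + i) : SB N) := by
  rw [coe_sig_of_lt hi, shiftHom_sG, coe_sig_of_lt]

theorem shiftHom_sig_inv {i : ℕ} (hi : i < n - 1) :
    shiftHom N k h ↑(sig n i)⁻¹ = (↑(sig N (k + i))⁻¹ : SB N) := by
  rw [coe_sig_inv_of_lt hi, coe_sig_inv_of_lt (by omega)]
  rfl

theorem shiftHom_tau {i : ℕ} (hi : i < n - 1) : shiftHom N k h (tau n i) = tau N (k + i) := by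
  rw [tau_of_lt hi, tau_of_lt (by omega)]
  rfl

theorem shiftHom_blk (b : Bool) {i : ℕ} (hi : i < n - 1) :
    shiftHom N k h (blk n b i) = blk N b (k + i) := by
  cases b <;> simp [blk, shiftHom_tau h hi, shiftHom_sig h hi]

end Shift

theorem shiftHom_blockProd {n N c : ℕ} (h : 2 * c + n ≤ N) (l : List Bool) :
    ∀ o, 2 * (o + l.length) ≤ n →
      shiftHom N (2 * c) h (blockProd n o l) = blockProd N (c + o) l := by
  induction l with
  | nil => exact fun o _ => map_one _
  | cons b l ih =>
    intro o ho
    simp only [List.length_cons] at ho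
    simp only [blockProd, map_mul, shiftHom_blk h b (show 2 * o < n - 1 by omega),
      ih (o + 1) (by omega), mul_add, add_assoc]

theorem starIn_blockProd {c m N : ℕ} (h : 2 * c + m ≤ N) {l l' : List Bool} (hl : l.length = c)
    (hl' : 2 * l'.length ≤ m) :
    starIn N h (blockProd (2 * c) 0 l) (blockProd m 0 l') = blockProd N 0 (l ++ l') := by
  have hincl := shiftHom_blockProd (n := 2 * c) (c := 0) (N := N) (by omega) l 0 (by omega)
  have hshift := shiftHom_blockProd h l' 0 (by omega)
  simp only [Nat.add_zero] at hincl hshift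
  rw [blockProd_append, starIn, inclSB, ← hincl, hshift, hl, zero_add]

theorem prod_map_range'_blk (N : ℕ) (f : ℕ → Bool) (m : ℕ) :
    ∀ o, ((List.range' o m).map fun j => blk N (f j) (2 * j)).prod =
      blockProd N o ((List.range' o m).map f) := by
  induction m with
  | zero => exact fun o => rfl
  | succ m ih => exact fun o => by simp [List.range'_succ, blockProd, ih]

theorem map_range_lt_eq_replicate {d k : ℕ} (hk : k ≤ d) :
    (List.range d).map (fun j => decide (j < k)) =
      List.replicate k true ++ List.replicate (d - k) false := by
  refine List.ext_getElem (by simp; omega) fun i h₁ h₂ => ?_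
  simp only [List.getElem_map, List.getElem_range, List.getElem_append, List.length_replicate,
    List.getElem_replicate]
  split_ifs <;> simp_all

theorem W_eq_blockProd {d k : ℕ} (hk : k ≤ d) :
    W d k = blockProd (2 * d) 0 (List.replicate k true ++ List.replicate (d - k) false) := by
  rw [← map_range_lt_eq_replicate hk, List.range_eq_range', ← prod_map_range'_blk, W,
    ← List.range_eq_range']
  refine congrArg List.prod (List.map_congr_left fun j hj => ?_)
  have hj : 2 * j < 2 * d - 1 := by simp at hj; omega
  by_cases hjk : j < k <;> simp [hj, hjk, blk, tau_of_lt, coe_sig_of_lt]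

theorem ofHZ_mul {n : ℕ} (β γ : SB n) : ofHZ (β * γ) = ofHZ β * ofHZ γ := by
  rw [ofHZ, ofHZ, ofHZ, Algebra.TensorProduct.tmul_mul_tmul, one_mul, heckeOf, heckeOf, heckeOf,
    ← map_mul, MonoidAlgebra.of_apply, MonoidAlgebra.of_apply, MonoidAlgebra.of_apply,
    MonoidAlgebra.single_mul_single, one_mul]

theorem braidClass_mul_comm {m : ℕ} (hm : 0 < m) (β γ : SB m) :
    braidClass m hm (β * γ) = braidClass m hm (γ * β) := by
  rw [braidClass, braidClass, ofHZ_mul, ofHZ_mul, markovClass, markovClass,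
    Submodule.Quotient.eq]
  exact Submodule.subset_span (Or.inl (Or.inl ⟨⟨m, hm⟩, _, _, rfl⟩))

theorem braidClass_eq_of_semiconjBy {N : ℕ} (hN : 0 < N) {x y : SB N} (u : (SB N)ˣ)
    (h : SemiconjBy (u : SB N) x y) : braidClass N hN x = braidClass N hN y := by
  rw [← Units.inv_mul_cancel_left u x, h.eq, braidClass_mul_comm, mul_assoc, Units.mul_inv,
    mul_one]

theorem iotaHZ_ofHZ {n : ℕ} (β : SB n) :
    iotaHZ n (ofHZ β) = ofHZ (inclSB (n + 1) n.le_succ β) := by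
  simp only [iotaHZ, ofHZ, Algebra.TensorProduct.map_tmul, AlgHom.id_apply, heckeIncl, heckeOf,
    RingQuot.liftAlgHom_mkAlgHom_apply, AlgHom.coe_comp, Function.comp_apply,
    MonoidAlgebra.of_apply, MonoidAlgebra.mapDomainAlgHom_apply, MonoidAlgebra.mapDomain_single]

theorem markovClass_iotaHZ {n : ℕ} (hn : 0 < n) (a : HeckeZ n) :
    markovClass (n + 1) n.succ_pos (iotaHZ n a) = markovClass n hn a :=
  ((Submodule.Quotient.eq (Submodule.span Lqz markovRels)).2
    (Submodule.subset_span (Or.inl (Or.inr ⟨⟨n, hn⟩, a, rfl⟩)))).symm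

theorem braidClass_inclSB {n N : ℕ} (hn : 0 < n) (hN : 0 < N) (e : N = n + 1) (h : n ≤ N)
    (β : SB n) : braidClass N hN (inclSB N h β) = braidClass n hn β := by
  subst e
  rw [braidClass, ← iotaHZ_ofHZ, markovClass_iotaHZ hn, braidClass]

theorem SB.semiconjBy_of_forall_gen {n : ℕ} {M : Type*} [Monoid M] {a : M} {f g : SB n →* M}
    (h : ∀ x, SemiconjBy a (f (SB.mk (.of x))) (g (SB.mk (.of x)))) (β : SB n) :
    SemiconjBy a (f β) (g β) := by
  induction β using Con.induction_on with
  | _ w =>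
    change SemiconjBy a (f (SB.mk w)) (g (SB.mk w))
    induction w using FreeMonoid.inductionOn' with
    | one => simp
    | of_mul x w ih =>
      rw [map_mul, map_mul, map_mul]
      exact (h x).mul_right ih

theorem semiconjBy_sigPrefix_shiftHom {n N : ℕ} (e : N = n + 1) (h₀ : 0 + n ≤ N)
    (h₁ : 1 + n ≤ N) (β : SB n) :
    SemiconjBy (sigPrefix N (N - 1) : SB N) (shiftHom N 0 h₀ β) (shiftHom N 1 h₁ β) := by
  refine SB.semiconjBy_of_forall_gen (fun x => ?_) β
  have hconj {y : ℕ → SB N} (hy : BraidCompatible N y) {i : ℕ} (hi : i < n - 1) :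
      SemiconjBy (sigPrefix N (N - 1) : SB N) (y (0 + i)) (y (1 + i)) := by
    rw [zero_add, add_comm]
    exact hy.semiconjBy_sigPrefix (by omega) le_rfl
  cases x with
  | pos i =>
    rw [show SB.mk (.of (.pos i)) = (sig n i : SB n) from (coe_sig_of_lt i.2).symm,
      shiftHom_sig _ i.2, shiftHom_sig _ i.2]
    exact hconj (braidCompatible_sig N) i.2
  | neg i =>
    rw [show SB.mk (.of (.neg i)) = (↑(sig n i)⁻¹ : SB n) from (coe_sig_inv_of_lt i.2).symm,
      shiftHom_sig_inv _ i.2, shiftHom_sig_inv _ i.2]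
    exact (hconj (braidCompatible_sig N) i.2).units_inv_right
  | tau i =>
    rw [show SB.mk (.of (.tau i)) = tau n i from (tau_of_lt i.2).symm,
      shiftHom_tau _ i.2, shiftHom_tau _ i.2]
    exact hconj (braidCompatible_tau N) i.2

theorem braidClass_starIn_one_right {n : ℕ} (hn : 0 < n) (α : SB n) :
    braidClass (n + 1) n.succ_pos (starIn (n + 1) le_rfl α (1 : SB 1)) = braidClass n hn α := by
  rw [starIn, map_one, mul_one, braidClass_inclSB hn _ rfl]

theorem braidClass_starIn_one_left {m : ℕ} (hm : 0 < m) (β : SB m) :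
    braidClass (1 + m) (Nat.add_pos_right 1 hm) (starIn (1 + m) le_rfl (1 : SB 1) β) =
      braidClass m hm β := by
  rw [starIn, map_one, one_mul, ← braidClass_eq_of_semiconjBy _ _
    (semiconjBy_sigPrefix_shiftHom (add_comm 1 m) (by omega) le_rfl β)]
  exact braidClass_inclSB hm _ (add_comm 1 m) (by omega) β

theorem braidClass_blockProd_of_perm {N N' : ℕ} (e : N = N') (hN : 0 < N) (hN' : 0 < N')
    {l l' : List Bool} (p : l.Perm l') (hl : 2 * l.length ≤ N) :
    braidClass N hN (blockProd N 0 l) = braidClass N' hN' (blockProd N' 0 l') := by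
  subst e
  obtain ⟨u, hu, -⟩ := exists_semiconjBy_blockProd_of_perm p 0 (by simpa using hl)
  exact braidClass_eq_of_semiconjBy hN u hu

theorem braidClass_W_starIn_W {d d' k k' : ℕ} (hk : k ≤ d) (hk' : k' ≤ d')
    (hN : 0 < 2 * d + 2 * d') (hN' : 0 < 2 * (d + d')) :
    braidClass (2 * d + 2 * d') hN (starIn (2 * d + 2 * d') le_rfl (W d k) (W d' k')) =
      braidClass (2 * (d + d')) hN' (W (d + d') (k + k')) := by
  rw [W_eq_blockProd hk, W_eq_blockProd hk', W_eq_blockProd (by omega),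
    starIn_blockProd _ (by simp; omega) (by simp; omega)]
  refine braidClass_blockProd_of_perm (by ring) _ _ ?_ (by simp; omega)
  rw [List.perm_iff_count]
  intro b
  cases b
  · simp [List.count_replicate]
    omega
  · simp [List.count_replicate]

theorem two_mul_length_pos {α : Type*} {l : List α} (hl : l ≠ []) : 0 < 2 * l.length := by
  simpa [List.length_pos_iff]

/-- The empty list is sent to the class `[1, 1]` of `W_{0,0}`. -/
def blockClass (l : List Bool) : Markov :=
  if h : l = [] then braidClass 1 one_pos 1
  else braidClass (2 * l.length) (two_mul_length_pos h) (blockProd _ 0 l)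

theorem blockClass_eq_braidClass {l : List Bool} (hl : l ≠ []) {N : ℕ} (e : 2 * l.length = N) :
    blockClass l = braidClass N (e ▸ two_mul_length_pos hl) (blockProd N 0 l) := by
  subst e
  simp [blockClass, hl]

def IsStarMul (mul : Markov →ₗ[Lqz] Markov →ₗ[Lqz] Markov) : Prop :=
  ∀ (n m : ℕ) (hn : 0 < n) (hm : 0 < m) (α : SB n) (β : SB m),
    mul (braidClass n hn α) (braidClass m hm β) =
      braidClass (n + m) (Nat.add_pos_left hn m) (starIn (n + m) le_rfl α β)

section Multiplication

variable {mul : Markov →ₗ[Lqz] Markov →ₗ[Lqz] Markov}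

theorem IsStarMul.blockClass_mul (hmul : IsStarMul mul) (l l' : List Bool) :
    mul (blockClass l) (blockClass l') = blockClass (l ++ l') := by
  rcases eq_or_ne l [] with rfl | hl
  · rcases eq_or_ne l' [] with rfl | hl'
    · rw [List.nil_append, blockClass, dif_pos rfl, hmul]
      exact braidClass_starIn_one_right one_pos 1
    · rw [List.nil_append, blockClass_eq_braidClass hl' rfl, blockClass, dif_pos rfl, hmul,
        braidClass_starIn_one_left]
  · rcases eq_or_ne l' [] with rfl | hl'
    · rw [List.append_nil, blockClass_eq_braidClass hl rfl, blockClass, dif_pos rfl, hmul,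
        braidClass_starIn_one_right]
    · rw [blockClass_eq_braidClass hl rfl, blockClass_eq_braidClass hl' rfl, hmul,
        starIn_blockProd _ rfl le_rfl,
        blockClass_eq_braidClass (N := 2 * l.length + 2 * l'.length)
          (List.append_ne_nil_of_left_ne_nil hl l') (by simp [mul_add])]

theorem IsStarMul.powAux_blockClass (hmul : IsStarMul mul) (b : Bool) (k : ℕ) :
    powAux mul (blockClass []) (blockClass [b]) k = blockClass (List.replicate k b) := by
  induction k with
  | zero => rfl
  | succ k ih =>
    rw [powAux, ih, hmul.blockClass_mul, List.replicate_succ, List.singleton_append]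

end Multiplication

theorem blockClass_singleton_true :
    blockClass [true] = braidClass 2 two_pos (tauG (⟨0, Nat.one_pos⟩ : Fin (2 - 1))) := by
  rw [blockClass_eq_braidClass (List.cons_ne_nil _ _) rfl]
  simp [blockProd, blk, tau_of_lt]

theorem blockClass_singleton_false :
    blockClass [false] = braidClass 2 two_pos
      (tauG (⟨0, Nat.one_pos⟩ : Fin (2 - 1)) * sG (⟨0, Nat.one_pos⟩ : Fin (2 - 1))) := by
  rw [blockClass_eq_braidClass (List.cons_ne_nil _ _) rfl]
  simp [blockProd, blk, tau_of_lt, coe_sig_of_lt]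

/-- For all `d, d' ≥ 0`, `0 ≤ k ≤ d` and `0 ≤ k' ≤ d'`, the equality
`[W_{d,k} ∗ W_{d',k'}, 2(d+d')] = [W_{d+d',k+k'}, 2(d+d')]` holds in `Markov(⊔SB)` (for
`d = 0` or `d' = 0` the factor `W_{0,0}` is the trivial braid on one strand and the number of
strands is adjusted accordingly); in particular, the class of `W_{d,k}` equals the product
`X^k Y^{d-k}` of the classes `X = [τ_1, 2]` and `Y = [τ_1σ_1, 2]`. -/
theorem wclass_product_formula :
    (∀ (d d' k k' : ℕ) (hd : 0 < d) (hd' : 0 < d') (hk : k ≤ d) (hk' : k' ≤ d'),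
      braidClass (2 * d + 2 * d') (by omega)
          (starIn (2 * d + 2 * d') le_rfl (W d k) (W d' k')) =
        braidClass (2 * (d + d')) (by omega) (W (d + d') (k + k'))) ∧
    (∀ (d' k' : ℕ) (hd' : 0 < d') (hk' : k' ≤ d'),
      braidClass (1 + 2 * d') (by omega) (starIn (1 + 2 * d') le_rfl (1 : SB 1) (W d' k')) =
        braidClass (2 * d') (by omega) (W d' k')) ∧
    (∀ (d k : ℕ) (hd : 0 < d) (hk : k ≤ d),
      braidClass (2 * d + 1) (by omega) (starIn (2 * d + 1) le_rfl (W d k) (1 : SB 1)) =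
        braidClass (2 * d) (by omega) (W d k)) ∧
    (braidClass (1 + 1) (by omega) (starIn (1 + 1) le_rfl (1 : SB 1) (1 : SB 1)) =
      braidClass 1 one_pos (1 : SB 1)) ∧
    (∀ mul : Markov →ₗ[Lqz] Markov →ₗ[Lqz] Markov,
      (∀ (n m : ℕ) (hn : 0 < n) (hm : 0 < m) (α : SB n) (β : SB m),
        mul (braidClass n hn α) (braidClass m hm β) =
          braidClass (n + m) (by omega) (starIn (n + m) le_rfl α β)) →
      ∀ (d k : ℕ) (hd : 0 < d) (hk : k ≤ d),
        braidClass (2 * d) (by omega) (W d k) =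
          mul (powAux mul (braidClass 1 one_pos 1)
                (braidClass 2 two_pos (tauG (⟨0, by omega⟩ : Fin (2 - 1)))) k)
              (powAux mul (braidClass 1 one_pos 1)
                (braidClass 2 two_pos
                  (tauG (⟨0, by omega⟩ : Fin (2 - 1)) * sG (⟨0, by omega⟩ : Fin (2 - 1))))
                (d - k))) := by
  refine ⟨fun d d' k k' _ _ hk hk' => braidClass_W_starIn_W hk hk' _ _,
    fun d' k' hd' _ => braidClass_starIn_one_left (by omega) _,
    fun d k hd _ => braidClass_starIn_one_right (by omega) _,
    braidClass_starIn_one_right one_pos 1, fun mul (hmul : IsStarMul mul) d k hd hk => ?_⟩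
  have hone : braidClass 1 one_pos 1 = blockClass [] := rfl
  rw [hone, ← blockClass_singleton_true, ← blockClass_singleton_false,
    hmul.powAux_blockClass, hmul.powAux_blockClass, hmul.blockClass_mul,
    blockClass_eq_braidClass (N := 2 * d) (by simp; omega) (by simp; omega), W_eq_blockProd hk]

end
end SingularHOMFLYPT
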